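/- Let I = [a,b] ⊂ ℝ with a < b, let γ > 0, ε ∈ (0,1), c > 0, let K : I → ℝ be continuous with 0 < K_0 ≤ K(x) ≤ K_1, and let H : I → ℝ be measurable with 0 ≤ H(x) ≤ H_1 and ε^γ H_1 ≤ K_0. Define R_a^ε = {(x,y) ∈ ℝ² : x ∈ I, 0 < y < ε K(x)} and θ₁^ε = {(x,y) ∈ ℝ² : x ∈ I, ε(K(x) − ε^γ H(x)) < y < ε K(x)}. Let f ∈ L²(θ₁^ε) satisfy (1/ε^{γ+1}) ∫_{θ₁^ε} f² dx dy ≤ c, and suppose v is continuously differentiable on an open set containing the closure of R_a^ε and satisfies the energy identity ∫_{R_a^ε} ( |∇v|² + v² ) dx dy = (1/ε^γ) ∫_{θ₁^ε} f v dx dy. Then (1/ε) ∫_{R_a^ε} ( |∇v|² + v² ) dx dy ≤ c · max(2H_1/K_0, H_1 K_1); in particular the bound is independent of ε. -/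

import Mathlib

/-!
On a vertical segment of length `L`, a `C¹` function `w` satisfies
`w(y)² ≤ (1/L) ∫ w² + ∫ |2 w w'| ≤ (1/L + t) ∫ w² + t⁻¹ ∫ w'²`, because `w²` exceeds its minimum,
which is at most its mean, by at most `∫ |(w²)'|`. Integrating this over the part of the segment
inside `θ₁` (of length `ε^(γ+1) H(x)`) with `t = 1/K₀`, and then over `x` by Fubini, gives the
trace estimate `∫_{θ₁} v² ≤ ε^γ M T`, where `T` is the energy on `R_a` and
`M = max (2H₁/K₀) (H₁K₁)`. Cauchy–Schwarz in the energy identity then gives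
`T² ≤ ε^(-2γ) (∫_{θ₁} f²) (∫_{θ₁} v²) ≤ c ε M T`, hence `T ≤ c ε M`.
-/

open MeasureTheory Set
open scoped Interval ENNReal

theorem abs_two_mul_le_mul_sq_add_inv_mul_sq {t : ℝ} (ht : 0 < t) (A B : ℝ) :
    |2 * A * B| ≤ t * A ^ 2 + t⁻¹ * B ^ 2 := by
  rw [abs_mul, abs_mul, abs_two, ← sq_abs A, ← sq_abs B, ← sub_nonneg]
  have : t * |A| ^ 2 + t⁻¹ * |B| ^ 2 - 2 * |A| * |B| = t⁻¹ * (t * |A| - |B|) ^ 2 := by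
    field_simp; ring
  rw [this]; positivity

theorem le_integral_div_add_integral_abs_deriv {g g' : ℝ → ℝ} {a b : ℝ} (hab : a < b)
    (hg : ∀ x ∈ Icc a b, HasDerivAt g (g' x) x) (hg' : IntervalIntegrable g' volume a b)
    {y : ℝ} (hy : y ∈ Icc a b) :
    g y ≤ (∫ x in a..b, g x) / (b - a) + ∫ x in a..b, |g' x| := by
  have hcont : ContinuousOn g (Icc a b) := fun x hx => (hg x hx).continuousAt.continuousWithinAt
  obtain ⟨s, hs, hmin⟩ := isCompact_Icc.exists_isMinOn (nonempty_Icc.2 hab.le) hcont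
  have hmean : g s ≤ (∫ x in a..b, g x) / (b - a) := by
    rw [le_div_iff₀ (sub_pos.2 hab)]
    simpa [mul_comm] using intervalIntegral.integral_mono_on hab.le
      (intervalIntegrable_const (μ := volume)) (hcont.intervalIntegrable_of_Icc hab.le)
      fun x hx => hmin hx
  have hvar : g y - g s ≤ ∫ x in a..b, |g' x| := by
    have hsub : uIcc s y ⊆ Icc a b := uIcc_subset_Icc hs hy
    rw [← intervalIntegral.integral_eq_sub_of_hasDerivAt (fun x hx => hg x (hsub hx))
      (hg'.mono_set (by rwa [uIcc_of_le hab.le])), intervalIntegral.integral_of_le hab.le]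
    calc (∫ x in s..y, g' x) ≤ |∫ x in s..y, g' x| := le_abs_self _
      _ ≤ ∫ x in Ι s y, |g' x| := by
        simpa only [Real.norm_eq_abs] using
          intervalIntegral.norm_integral_le_integral_norm_uIoc (f := g') (μ := volume)
      _ ≤ ∫ x in Ioc a b, |g' x| :=
        setIntegral_mono_set ((intervalIntegrable_iff_integrableOn_Ioc_of_le hab.le).1 hg').abs
          (ae_of_all _ fun x => abs_nonneg _)
          (Ioc_subset_Ioc (le_min hs.1 hy.1) (max_le hs.2 hy.2)).eventuallyLE
  linarith

theorem setIntegral_sq_le_measureReal_mul {w w' : ℝ → ℝ} {a b t : ℝ} (hab : a < b) (ht : 0 < t)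
    (hw : ∀ y ∈ Icc a b, HasDerivAt w (w' y) y) (hw' : ContinuousOn w' (Icc a b))
    {S : Set ℝ} (hS : MeasurableSet S) (hSab : S ⊆ Icc a b) :
    ∫ y in S, w y ^ 2 ≤ volume.real S *
      ((1 / (b - a) + t) * (∫ y in a..b, w y ^ 2) + t⁻¹ * ∫ y in a..b, w' y ^ 2) := by
  have hwc : ContinuousOn w (Icc a b) := fun x hx => (hw x hx).continuousAt.continuousWithinAt
  have hsq : ∀ x ∈ Icc a b, HasDerivAt (fun z => w z ^ 2) (2 * w x * w' x) x := fun x hx =>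
    ((hw x hx).pow 2).congr_deriv (by ring)
  have hsq' : IntervalIntegrable (fun x => 2 * w x * w' x) volume a b :=
    ((continuousOn_const.mul hwc).mul hw').intervalIntegrable_of_Icc hab.le
  have hw2 : IntervalIntegrable (fun x => w x ^ 2) volume a b :=
    (hwc.pow 2).intervalIntegrable_of_Icc hab.le
  have hw'2 : IntervalIntegrable (fun x => w' x ^ 2) volume a b :=
    (hw'.pow 2).intervalIntegrable_of_Icc hab.le
  have hcross : ∫ x in a..b, |2 * w x * w' x| ≤
      t * (∫ x in a..b, w x ^ 2) + t⁻¹ * ∫ x in a..b, w' x ^ 2 := by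
    rw [← intervalIntegral.integral_const_mul, ← intervalIntegral.integral_const_mul,
      ← intervalIntegral.integral_add (hw2.const_mul t) (hw'2.const_mul t⁻¹)]
    exact intervalIntegral.integral_mono_on hab.le hsq'.abs
      ((hw2.const_mul t).add (hw'2.const_mul t⁻¹)) fun x _ =>
        abs_two_mul_le_mul_sq_add_inv_mul_sq ht _ _
  have hbound : ∀ y ∈ S, w y ^ 2 ≤
      (1 / (b - a) + t) * (∫ y in a..b, w y ^ 2) + t⁻¹ * ∫ y in a..b, w' y ^ 2 := by
    intro y hy
    calc w y ^ 2 ≤ (∫ x in a..b, w x ^ 2) / (b - a) + ∫ x in a..b, |2 * w x * w' x| :=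
          le_integral_div_add_integral_abs_deriv hab hsq hsq' (hSab hy)
      _ ≤ (∫ x in a..b, w x ^ 2) / (b - a) +
          (t * (∫ x in a..b, w x ^ 2) + t⁻¹ * ∫ x in a..b, w' x ^ 2) := by gcongr
      _ = _ := by ring
  have hSfin : volume S ≠ ⊤ := ((measure_mono hSab).trans_lt measure_Icc_lt_top).ne
  calc ∫ y in S, w y ^ 2 ≤ ∫ y in S, ((1 / (b - a) + t) * (∫ y in a..b, w y ^ 2) +
        t⁻¹ * ∫ y in a..b, w' y ^ 2) :=
        setIntegral_mono_on ((hwc.pow 2).integrableOn_Icc.mono_set hSab)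
          (integrableOn_const hSfin) hS hbound
    _ = _ := by rw [setIntegral_const, smul_eq_mul]

theorem sq_integral_mul_le {α : Type*} [MeasurableSpace α] {μ : Measure α} {f g : α → ℝ}
    (hf : MemLp f 2 μ) (hg : MemLp g 2 μ) :
    (∫ x, f x * g x ∂μ) ^ 2 ≤ (∫ x, f x ^ 2 ∂μ) * ∫ x, g x ^ 2 ∂μ := by
  have hfg : Integrable (fun x => f x * g x) μ := hf.integrable_mul hg
  have hquad : ∀ r : ℝ, 0 ≤ (∫ x, f x ^ 2 ∂μ) * (r * r) + 2 * (∫ x, f x * g x ∂μ) * r +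
      ∫ x, g x ^ 2 ∂μ := fun r => by
    have hexp : ∫ x, (r * f x + g x) ^ 2 ∂μ = (∫ x, f x ^ 2 ∂μ) * (r * r) +
        2 * (∫ x, f x * g x ∂μ) * r + ∫ x, g x ^ 2 ∂μ := by
      calc ∫ x, (r * f x + g x) ^ 2 ∂μ
          = ∫ x, ((r * r) * f x ^ 2 + (2 * r) * (f x * g x) + g x ^ 2) ∂μ :=
            integral_congr_ae (ae_of_all _ fun x => by ring)
        _ = _ := by
          rw [integral_add ((hf.integrable_sq.const_mul _).fun_add (hfg.const_mul _))
            hg.integrable_sq, integral_add (hf.integrable_sq.const_mul _) (hfg.const_mul _),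
            integral_const_mul, integral_const_mul]
          ring
    exact hexp ▸ integral_nonneg fun x => sq_nonneg _
  have hdisc := discrim_le_zero hquad
  rw [discrim] at hdisc
  nlinarith

theorem ContinuousOn.exists_continuous_eqOn_Icc {α β : Type*} [LinearOrder α] [TopologicalSpace α]
    [OrderTopology α] [TopologicalSpace β] {f : α → β} {a b : α} (hab : a ≤ b)
    (hf : ContinuousOn f (Icc a b)) : ∃ g : α → β, Continuous g ∧ EqOn g f (Icc a b) :=
  ⟨IccExtend hab ((Icc a b).domRestrict f), continuous_IccExtend_iff.2 hf.domRestrict,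
    fun _ hx => IccExtend_of_mem _ _ hx⟩

theorem ContinuousOn.memLp_restrict_of_isCompact_closure {X E : Type*} [TopologicalSpace X]
    [MeasurableSpace X] [OpensMeasurableSpace X] {μ : Measure X}
    [IsFiniteMeasureOnCompacts μ] [NormedAddCommGroup E] [SecondCountableTopologyEither X E]
    {g : X → E} {S : Set X} (p : ℝ≥0∞) (hg : ContinuousOn g (closure S))
    (hS : IsCompact (closure S)) : MemLp g p (μ.restrict S) := by
  refine MemLp.mono_measure (Measure.restrict_mono subset_closure le_rfl) ?_
  have : IsFiniteMeasure (μ.restrict (closure S)) := isFiniteMeasure_restrict.2 hS.measure_ne_top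
  obtain ⟨C, hC⟩ := hS.exists_bound_of_continuousOn hg
  exact MemLp.of_bound (hg.aestronglyMeasurable isClosed_closure.measurableSet) C
    ((ae_restrict_iff' isClosed_closure.measurableSet).2 (ae_of_all _ hC))

section RegionBetween

variable {α : Type*} {f g : α → ℝ} {s : Set α}

theorem regionBetween_congr {f' g' : α → ℝ} (hf : EqOn f f' s) (hg : EqOn g g' s) :
    regionBetween f g s = regionBetween f' g' s := by
  ext p
  simp only [regionBetween, mem_ofPred_eq]
  exact and_congr_right fun hp => by rw [hf hp, hg hp]

theorem prodMk_mem_closure_regionBetween [TopologicalSpace α] [T1Space α] {x : α} (hx : x ∈ s)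
    (hfg : f x < g x) {y : ℝ} (hy : y ∈ Icc (f x) (g x)) :
    (x, y) ∈ closure (regionBetween f g s) := by
  have hslice : {x} ×ˢ Ioo (f x) (g x) ⊆ regionBetween f g s := by
    rintro ⟨x', y'⟩ ⟨rfl, hy'⟩
    exact ⟨hx, hy'⟩
  refine closure_mono hslice ?_
  rw [closure_prod_eq, closure_singleton, closure_Ioo hfg.ne]
  exact ⟨rfl, hy⟩

theorem regionBetween_mono {f' g' : α → ℝ} (hf : ∀ x ∈ s, f' x ≤ f x)
    (hg : ∀ x ∈ s, g x ≤ g' x) :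
    regionBetween f g s ⊆ regionBetween f' g' s := fun _ ⟨hx, hl, hu⟩ =>
  ⟨hx, (hf _ hx).trans_lt hl, hu.trans_le (hg _ hx)⟩

theorem isCompact_closure_regionBetween [PseudoMetricSpace α] [ProperSpace α]
    (hs : Bornology.IsBounded s) {A B : ℝ} (hf : ∀ x ∈ s, A ≤ f x) (hg : ∀ x ∈ s, g x ≤ B) :
    IsCompact (closure (regionBetween f g s)) :=
  Bornology.IsBounded.isCompact_closure <| (hs.prod (Metric.isBounded_Icc A B)).subset
    fun _ ⟨hx, hl, hu⟩ => ⟨hx, (hf _ hx).trans hl.le, hu.le.trans (hg _ hx)⟩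

variable {E : Type*} [NormedAddCommGroup E] [NormedSpace ℝ E] {φ : α × ℝ → E}

theorem integral_indicator_regionBetween_slice (x : α) :
    ∫ y, (regionBetween f g s).indicator φ (x, y) =
      s.indicator (fun x => ∫ y in Ioo (f x) (g x), φ (x, y)) x := by
  by_cases hx : x ∈ s
  · rw [indicator_of_mem hx, ← integral_indicator measurableSet_Ioo]
    congr 1 with y
    simp [indicator, regionBetween, hx]
  · simp [indicator, regionBetween, hx]

variable [MeasurableSpace α] {μ : Measure α}

theorem integrableOn_integral_regionBetween_slice (hf : Measurable f) (hg : Measurable g)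
    (hs : MeasurableSet s) (hφ : IntegrableOn φ (regionBetween f g s) (μ.prod volume)) :
    IntegrableOn (fun x => ∫ y in Ioo (f x) (g x), φ (x, y)) s μ := by
  rw [← integrable_indicator_iff hs, ← funext integral_indicator_regionBetween_slice]
  exact ((integrable_indicator_iff (measurableSet_regionBetween hf hg hs)).2
    hφ).integral_prod_left

theorem setIntegral_regionBetween [SFinite μ] (hf : Measurable f) (hg : Measurable g)
    (hs : MeasurableSet s) (hφ : IntegrableOn φ (regionBetween f g s) (μ.prod volume)) :
    ∫ p in regionBetween f g s, φ p ∂(μ.prod volume) =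
      ∫ x in s, (∫ y in Ioo (f x) (g x), φ (x, y)) ∂μ := by
  rw [← integral_indicator (measurableSet_regionBetween hf hg hs), ← integral_indicator hs,
    integral_prod _ ((integrable_indicator_iff (measurableSet_regionBetween hf hg hs)).2 hφ)]
  simp_rw [integral_indicator_regionBetween_slice]

end RegionBetween

theorem setIntegral_sq_regionBetween_le {s : Set ℝ} {l u : ℝ → ℝ} {v : ℝ × ℝ → ℝ}
    {U : Set (ℝ × ℝ)} {t α β : ℝ} (hs : MeasurableSet s) (hl : Measurable l) (hu : Measurable u)
    (hlu : ∀ x ∈ s, 0 ≤ l x ∧ l x ≤ u x) (hu0 : ∀ x ∈ s, 0 < u x)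
    (hU : IsOpen U) (hRU : closure (regionBetween 0 u s) ⊆ U) (hv : ContDiffOn ℝ 1 v U)
    (hv2 : IntegrableOn (fun p => v p ^ 2) (regionBetween 0 u s))
    (hdv2 : IntegrableOn (fun p => fderiv ℝ v p (0, 1) ^ 2) (regionBetween 0 u s))
    (ht : 0 < t) (hα : ∀ x ∈ s, (u x - l x) * (1 / u x + t) ≤ α)
    (hβ : ∀ x ∈ s, (u x - l x) * t⁻¹ ≤ β) :
    ∫ p in regionBetween l u s, v p ^ 2 ≤ α * (∫ p in regionBetween 0 u s, v p ^ 2) +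
      β * ∫ p in regionBetween 0 u s, fderiv ℝ v p (0, 1) ^ 2 := by
  have hslice : ∀ x ∈ s, ∫ y in Ioo (l x) (u x), v (x, y) ^ 2 ≤
      α * (∫ y in Ioo 0 (u x), v (x, y) ^ 2) +
        β * ∫ y in Ioo 0 (u x), fderiv ℝ v (x, y) (0, 1) ^ 2 := by
    intro x hx
    have hxU : MapsTo (fun y => (x, y)) (Icc 0 (u x)) U := fun y hy =>
      hRU (prodMk_mem_closure_regionBetween hx (hu0 x hx) hy)
    have hderiv : ∀ y ∈ Icc 0 (u x),
        HasDerivAt (fun z => v (x, z)) (fderiv ℝ v (x, y) (0, 1)) y := fun y hy =>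
      ((hv.contDiffAt (hU.mem_nhds (hxU hy))).differentiableAt one_ne_zero).hasFDerivAt
        |>.comp_hasDerivAt y ((hasDerivAt_const y x).prodMk (hasDerivAt_id y))
    have hcont : ContinuousOn (fun y => fderiv ℝ v (x, y) (0, 1)) (Icc 0 (u x)) :=
      ((hv.continuousOn_fderiv_of_isOpen hU le_rfl).clm_apply continuousOn_const).comp
        (continuous_const.prodMk continuous_id).continuousOn hxU
    have h := setIntegral_sq_le_measureReal_mul (hu0 x hx) ht hderiv hcont measurableSet_Ioo
      (Ioo_subset_Icc_self.trans (Icc_subset_Icc (hlu x hx).1 le_rfl))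
    rw [Real.volume_real_Ioo_of_le (hlu x hx).2, sub_zero,
      intervalIntegral.integral_of_le (hu0 x hx).le, intervalIntegral.integral_of_le (hu0 x hx).le,
      integral_Ioc_eq_integral_Ioo, integral_Ioc_eq_integral_Ioo, mul_add, ← mul_assoc,
      ← mul_assoc] at h
    refine h.trans (add_le_add ?_ ?_) <;> gcongr
    exacts [hα x hx, hβ x hx]
  have hsub : regionBetween l u s ⊆ regionBetween 0 u s :=
    regionBetween_mono (fun x hx => (hlu x hx).1) fun _ _ => le_rfl
  rw [Measure.volume_eq_prod] at hv2 hdv2 ⊢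
  have hA := integrableOn_integral_regionBetween_slice measurable_zero hu hs hv2
  have hB := integrableOn_integral_regionBetween_slice measurable_zero hu hs hdv2
  rw [setIntegral_regionBetween hl hu hs (hv2.mono_set hsub),
    setIntegral_regionBetween measurable_zero hu hs hv2,
    setIntegral_regionBetween measurable_zero hu hs hdv2, ← integral_const_mul,
    ← integral_const_mul, ← integral_add (hA.const_mul α) (hB.const_mul β)]
  exact setIntegral_mono_on
    (integrableOn_integral_regionBetween_slice hl hu hs (hv2.mono_set hsub))
    ((hA.const_mul α).add (hB.const_mul β)) hs hslice

theorem thin_strip_width_bounds {ε e h k H₁ K₀ K₁ : ℝ} (hε0 : 0 < ε) (hε1 : ε ≤ 1) (he : 0 ≤ e)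
    (hh : 0 ≤ h) (hhH : h ≤ H₁) (hK₀ : 0 < K₀) (hk : K₀ ≤ k) (hkK : k ≤ K₁) :
    (ε * k - ε * (k - e * h)) * (1 / (ε * k) + K₀⁻¹) ≤ e * (2 * H₁ / K₀) ∧
      (ε * k - ε * (k - e * h)) * K₀ ≤ e * (H₁ * K₁) := by
  have hk0 : 0 < k := hK₀.trans_le hk
  have hH₁ : 0 ≤ H₁ := hh.trans hhH
  rw [show ε * k - ε * (k - e * h) = ε * (e * h) by ring]
  constructor
  · calc ε * (e * h) * (1 / (ε * k) + K₀⁻¹) = e * (h / k) + ε * (e * (h / K₀)) := by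
          field_simp
      _ ≤ e * (H₁ / K₀) + 1 * (e * (H₁ / K₀)) := by gcongr
      _ = e * (2 * H₁ / K₀) := by ring
  · calc ε * (e * h) * K₀ = e * ((ε * h) * K₀) := by ring
      _ ≤ e * (H₁ * K₁) := by
        gcongr
        exacts [(mul_le_of_le_one_left hh hε1).trans hhH, hk.trans hkK]

theorem setIntegral_sq_thinStrip_le {s : Set ℝ} {K H : ℝ → ℝ} {ε e H₁ K₀ K₁ : ℝ}
    {v : ℝ × ℝ → ℝ} {U : Set (ℝ × ℝ)} (hs : MeasurableSet s) (hK : Measurable K)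
    (hH : Measurable H) (hε0 : 0 < ε) (hε1 : ε ≤ 1) (he : 0 ≤ e) (hK₀ : 0 < K₀) (hH₁ : 0 ≤ H₁)
    (hKbd : ∀ x ∈ s, K₀ ≤ K x ∧ K x ≤ K₁) (hHbd : ∀ x ∈ s, 0 ≤ H x ∧ H x ≤ H₁)
    (hgap : ∀ x ∈ s, e * H x ≤ K x)
    (hRc : IsCompact (closure (regionBetween 0 (fun x => ε * K x) s)))
    (hU : IsOpen U) (hRU : closure (regionBetween 0 (fun x => ε * K x) s) ⊆ U)
    (hv : ContDiffOn ℝ 1 v U) :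
    ∫ p in regionBetween (fun x => ε * (K x - e * H x)) (fun x => ε * K x) s, v p ^ 2 ≤
      e * (max (2 * H₁ / K₀) (H₁ * K₁) * ∫ p in regionBetween 0 (fun x => ε * K x) s,
        (fderiv ℝ v p (1, 0) ^ 2 + fderiv ℝ v p (0, 1) ^ 2 + v p ^ 2)) := by
  set R := regionBetween 0 (fun x => ε * K x) s
  have hDv := (hv.continuousOn_fderiv_of_isOpen hU le_rfl).mono hRU
  have hD1 : IntegrableOn (fun p => fderiv ℝ v p (1, 0) ^ 2) R :=
    ((hDv.clm_apply continuousOn_const).memLp_restrict_of_isCompact_closure 2 hRc).integrable_sq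
  have hD2 : IntegrableOn (fun p => fderiv ℝ v p (0, 1) ^ 2) R :=
    ((hDv.clm_apply continuousOn_const).memLp_restrict_of_isCompact_closure 2 hRc).integrable_sq
  have hv2 : IntegrableOn (fun p => v p ^ 2) R :=
    ((hv.continuousOn.mono hRU).memLp_restrict_of_isCompact_closure 2 hRc).integrable_sq
  have hwidth := fun x hx => thin_strip_width_bounds hε0 hε1 he (hHbd x hx).1 (hHbd x hx).2 hK₀
    (hKbd x hx).1 (hKbd x hx).2
  refine (setIntegral_sq_regionBetween_le hs ((hK.sub (hH.const_mul e)).const_mul ε)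
    (hK.const_mul ε)
    (fun x hx => ⟨mul_nonneg hε0.le (sub_nonneg.2 (hgap x hx)), mul_le_mul_of_nonneg_left
      (sub_le_self _ (mul_nonneg he (hHbd x hx).1)) hε0.le⟩)
    (fun x hx => mul_pos hε0 (hK₀.trans_le (hKbd x hx).1)) hU hRU hv hv2 hD2 (inv_pos.2 hK₀)
    (fun x hx => (hwidth x hx).1) fun x hx => (inv_inv K₀).symm ▸ (hwidth x hx).2).trans ?_
  rw [integral_add (hD1.fun_add hD2) hv2, integral_add hD1 hD2]
  have hJ1 : 0 ≤ ∫ p in R, fderiv ℝ v p (1, 0) ^ 2 :=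
    integral_nonneg fun _ => sq_nonneg _
  have hM : 0 ≤ max (2 * H₁ / K₀) (H₁ * K₁) := le_max_of_le_left (by positivity)
  calc _ ≤ e * max (2 * H₁ / K₀) (H₁ * K₁) * (∫ p in _, v p ^ 2) +
        e * max (2 * H₁ / K₀) (H₁ * K₁) * ∫ p in _, fderiv ℝ v p (0, 1) ^ 2 := by
        gcongr
        exacts [le_max_left _ _, le_max_right _ _]
    _ ≤ _ := by nlinarith [mul_nonneg (mul_nonneg he hM) hJ1]

theorem le_mul_of_sq_le_mul {T I F S X Y e : ℝ} (he : 0 < e) (hT0 : 0 ≤ T) (hX : 0 ≤ X)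
    (hY : 0 ≤ Y) (hS0 : 0 ≤ S) (hTI : e * T = I) (hI : I ^ 2 ≤ F * S) (hF : F ≤ e * X)
    (hS : S ≤ e * (Y * T)) : T ≤ X * Y := by
  have hsq : e ^ 2 * (T * T) ≤ e ^ 2 * (X * Y * T) :=
    calc e ^ 2 * (T * T) = I ^ 2 := by rw [← hTI]; ring
      _ ≤ (e * X) * (e * (Y * T)) := hI.trans (mul_le_mul hF hS hS0 (by positivity))
      _ = e ^ 2 * (X * Y * T) := by ring
  rcases hT0.eq_or_lt with hT | hT
  · rw [← hT]; positivity
  · exact le_of_mul_le_mul_right (le_of_mul_le_mul_left hsq (by positivity)) hT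

theorem thin_domain_a_priori_bound_general
    (a b : ℝ) (hab : a < b) (γ ε c : ℝ) (hε : ε ∈ Set.Ioo (0 : ℝ) 1)
    (hc : 0 < c)
    (K : ℝ → ℝ) (hKcont : ContinuousOn K (Set.Icc a b))
    (K₀ K₁ : ℝ) (hK₀ : 0 < K₀)
    (hKbd : ∀ x ∈ Set.Icc a b, K₀ ≤ K x ∧ K x ≤ K₁)
    (H : ℝ → ℝ) (hHmeas : Measurable H)
    (H₁ : ℝ) (hHbd : ∀ x ∈ Set.Icc a b, 0 ≤ H x ∧ H x ≤ H₁)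
    (hsmall : ε ^ γ * H₁ ≤ K₀)
    (Ra θ₁ : Set (ℝ × ℝ))
    (hRa : Ra = {p : ℝ × ℝ | p.1 ∈ Set.Icc a b ∧ 0 < p.2 ∧ p.2 < ε * K p.1})
    (hθ₁ : θ₁ = {p : ℝ × ℝ | p.1 ∈ Set.Icc a b ∧
      ε * (K p.1 - ε ^ γ * H p.1) < p.2 ∧ p.2 < ε * K p.1})
    (f : ℝ × ℝ → ℝ) (hf : MemLp f 2 (volume.restrict θ₁))
    (hfbd : (1 / ε ^ (γ + 1)) * ∫ p in θ₁, (f p) ^ 2 ≤ c)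
    (v : ℝ × ℝ → ℝ) (U : Set (ℝ × ℝ)) (hU : IsOpen U) (hUR : closure Ra ⊆ U)
    (hv : ContDiffOn ℝ 1 v U)
    (henergy : ∫ p in Ra,
        ((fderiv ℝ v p (1, 0)) ^ 2 + (fderiv ℝ v p (0, 1)) ^ 2 + (v p) ^ 2) =
      (1 / ε ^ γ) * ∫ p in θ₁, f p * v p) :
    (1 / ε) * ∫ p in Ra,
        ((fderiv ℝ v p (1, 0)) ^ 2 + (fderiv ℝ v p (0, 1)) ^ 2 + (v p) ^ 2) ≤
      c * max (2 * H₁ / K₀) (H₁ * K₁) := by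
  obtain ⟨hε0, hε1⟩ := hε
  have hεγ : 0 < ε ^ γ := Real.rpow_pos_of_pos hε0 γ
  have hH₁ : 0 ≤ H₁ := (hHbd a (left_mem_Icc.2 hab.le)).1.trans (hHbd a (left_mem_Icc.2 hab.le)).2
  -- a continuous extension of `K` to all of `ℝ` makes the boundary curves measurable
  obtain ⟨K', hK', hK'K⟩ := hKcont.exists_continuous_eqOn_Icc hab.le
  have hK'bd : ∀ x ∈ Icc a b, K₀ ≤ K' x ∧ K' x ≤ K₁ := fun x hx => hK'K hx ▸ hKbd x hx
  have hgap : ∀ x ∈ Icc a b, ε ^ γ * H x ≤ K' x := fun x hx =>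
    (mul_le_mul_of_nonneg_left (hHbd x hx).2 hεγ.le).trans (hsmall.trans (hK'bd x hx).1)
  obtain rfl : Ra = regionBetween 0 (fun x => ε * K' x) (Icc a b) :=
    hRa.trans (regionBetween_congr (f := 0) (g := fun x => ε * K x) (fun _ _ => rfl)
      fun x hx => congrArg (ε * ·) (hK'K hx).symm)
  obtain rfl : θ₁ = regionBetween (fun x => ε * (K' x - ε ^ γ * H x)) (fun x => ε * K' x)
      (Icc a b) :=
    hθ₁.trans (regionBetween_congr (f := fun x => ε * (K x - ε ^ γ * H x))
      (g := fun x => ε * K x) (fun x hx => by simp only [hK'K hx])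
      fun x hx => congrArg (ε * ·) (hK'K hx).symm)
  have hRc : IsCompact (closure (regionBetween 0 (fun x => ε * K' x) (Icc a b))) :=
    isCompact_closure_regionBetween (Metric.isBounded_Icc a b) (fun _ _ => le_rfl)
      (B := ε * K₁) fun x hx => mul_le_mul_of_nonneg_left (hK'bd x hx).2 hε0.le
  have hθRa := regionBetween_mono (f' := 0) (g' := fun x => ε * K' x)
    (fun x hx => mul_nonneg hε0.le (sub_nonneg.2 (hgap x hx))) fun _ _ => le_rfl
  have hvθ : MemLp v 2 (volume.restrict _) :=
    ((hv.continuousOn.mono hUR).memLp_restrict_of_isCompact_closure 2 hRc).mono_measure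
      (Measure.restrict_mono hθRa le_rfl)
  rw [one_div_mul_eq_div, div_le_iff₀ (by positivity), Real.rpow_add_one hε0.ne'] at hfbd
  rw [one_div_mul_eq_div, div_le_iff₀ hε0, mul_right_comm]
  exact le_mul_of_sq_le_mul hεγ (integral_nonneg fun p => by positivity) (by positivity)
    (by positivity) (integral_nonneg fun p => sq_nonneg _) (by rw [henergy]; field_simp)
    (sq_integral_mul_le hf hvθ) (by linarith)
    (setIntegral_sq_thinStrip_le measurableSet_Icc hK'.measurable hHmeas hε0 hε1.le hεγ.le hK₀
      hH₁ hK'bd hHbd hgap hRc hU hUR hv)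

/-- Uniform a priori `H¹`-bound, in the rescaled norm, for the Neumann problem on the
rectified thin domain with right-hand side concentrated in the narrow strip. -/
theorem thin_domain_a_priori_bound
    (a b : ℝ) (hab : a < b) (γ ε c : ℝ) (hγ : 0 < γ) (hε : ε ∈ Set.Ioo (0 : ℝ) 1)
    (hc : 0 < c)
    (K : ℝ → ℝ) (hKcont : ContinuousOn K (Set.Icc a b))
    (K₀ K₁ : ℝ) (hK₀ : 0 < K₀)
    (hKbd : ∀ x ∈ Set.Icc a b, K₀ ≤ K x ∧ K x ≤ K₁)
    (H : ℝ → ℝ) (hHmeas : Measurable H)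
    (H₁ : ℝ) (hHbd : ∀ x ∈ Set.Icc a b, 0 ≤ H x ∧ H x ≤ H₁)
    (hsmall : ε ^ γ * H₁ ≤ K₀)
    (Ra θ₁ : Set (ℝ × ℝ))
    (hRa : Ra = {p : ℝ × ℝ | p.1 ∈ Set.Icc a b ∧ 0 < p.2 ∧ p.2 < ε * K p.1})
    (hθ₁ : θ₁ = {p : ℝ × ℝ | p.1 ∈ Set.Icc a b ∧
      ε * (K p.1 - ε ^ γ * H p.1) < p.2 ∧ p.2 < ε * K p.1})
    (f : ℝ × ℝ → ℝ) (hf : MemLp f 2 (volume.restrict θ₁))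
    (hfbd : (1 / ε ^ (γ + 1)) * ∫ p in θ₁, (f p) ^ 2 ≤ c)
    (v : ℝ × ℝ → ℝ) (U : Set (ℝ × ℝ)) (hU : IsOpen U) (hUR : closure Ra ⊆ U)
    (hv : ContDiffOn ℝ 1 v U)
    (henergy : ∫ p in Ra,
        ((fderiv ℝ v p (1, 0)) ^ 2 + (fderiv ℝ v p (0, 1)) ^ 2 + (v p) ^ 2) =
      (1 / ε ^ γ) * ∫ p in θ₁, f p * v p) :
    (1 / ε) * ∫ p in Ra,
        ((fderiv ℝ v p (1, 0)) ^ 2 + (fderiv ℝ v p (0, 1)) ^ 2 + (v p) ^ 2) ≤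
      c * max (2 * H₁ / K₀) (H₁ * K₁) :=
  thin_domain_a_priori_bound_general a b hab γ ε c hε hc K hKcont K₀ K₁ hK₀ hKbd H hHmeas H₁ hHbd
    hsmall Ra θ₁ hRa hθ₁ f hf hfbd v U hU hUR hv henergy
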